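/- De Morgan at the measure level: for formulas α and β, μ(¬(α ∨ β)) = μ(¬α)·μ(¬β). -/

import Mathlib

/-- Propositional formulas built from atoms via ¬, ∨, →. -/
inductive Formula (A : Type) : Type
  | atom : A → Formula A
  | neg  : Formula A → Formula A
  | orr  : Formula A → Formula A → Formula A
  | imp  : Formula A → Formula A → Formula A
deriving DecidableEq

/-- Well-formed sequences over a collection `V` of truth valuations. -/
inductive WFS (V : Type) : Type
  | leaf : V → WFS V
  | pair : WFS V → WFS V → WFS V
deriving DecidableEq

/-- Association between a WFS and a formula. -/
def Assoc {V A : Type} : WFS V → Formula A → Prop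
  | WFS.leaf _, Formula.atom _ => True
  | s, Formula.neg β => Assoc s β
  | WFS.pair s₁ s₂, Formula.orr α β => Assoc s₁ α ∧ Assoc s₂ β
  | WFS.pair s₁ s₂, Formula.imp α β => Assoc s₁ α ∧ Assoc s₂ β
  | _, _ => False

/-- Justification of a formula by a WFS (PML semantics). -/
def Justif {V A : Type} (val : V → A → Bool) : WFS V → Formula A → Prop
  | WFS.leaf v, Formula.atom a => val v a = true
  | s, Formula.neg β => ¬ Justif val s β
  | WFS.pair s₁ s₂, Formula.orr α β => Justif val s₁ α ∨ Justif val s₂ β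
  | WFS.pair s₁ s₂, Formula.imp α β => ¬ Justif val s₁ α ∨ Justif val s₂ β
  | _, _ => False

/-- Multiplicative weight allotment extending a basic weight distribution. -/
def weight {V : Type} (pbar : V → ℝ) : WFS V → ℝ
  | WFS.leaf v => pbar v
  | WFS.pair s₁ s₂ => weight pbar s₁ * weight pbar s₂

/-- The (finite) set of WFS associated to a formula. -/
def assocSeqs {V A : Type} [Fintype V] [DecidableEq V] : Formula A → Finset (WFS V)
  | Formula.atom _ => Finset.univ.image WFS.leaf
  | Formula.neg β => assocSeqs β
  | Formula.orr α β => (assocSeqs α ×ˢ assocSeqs β).image fun q => WFS.pair q.1 q.2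
  | Formula.imp α β => (assocSeqs α ×ˢ assocSeqs β).image fun q => WFS.pair q.1 q.2

-- The logical measure of a formula: total weight of associated justifying sequences.
open scoped Classical in
noncomputable def mu {V A : Type} [Fintype V] [DecidableEq V]
    (pbar : V → ℝ) (val : V → A → Bool) (φ : Formula A) : ℝ :=
  ∑ s ∈ (assocSeqs φ).filter (fun s => Justif val s φ), weight pbar s

/-- Derived conjunction: α ∧ β := ¬(¬α ∨ ¬β). -/
def Formula.conj {A : Type} (α β : Formula A) : Formula A :=
  Formula.neg (Formula.orr (Formula.neg α) (Formula.neg β))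

/-- Classical Boolean semantics. -/
def evalF {A : Type} (v : A → Bool) : Formula A → Bool
  | Formula.atom a => v a
  | Formula.neg α => !(evalF v α)
  | Formula.orr α β => evalF v α || evalF v β
  | Formula.imp α β => !(evalF v α) || evalF v β

/-- Diagonal sequence: the valuation `v` at every leaf position of a formula. -/
def diag {V A : Type} (v : V) : Formula A → WFS V
  | Formula.atom _ => WFS.leaf v
  | Formula.neg α => diag v α
  | Formula.orr α β => WFS.pair (diag v α) (diag v β)
  | Formula.imp α β => WFS.pair (diag v α) (diag v β)

/-- Number of atom occurrences in a formula. -/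
def numAtoms {A : Type} : Formula A → ℕ
  | Formula.atom _ => 1
  | Formula.neg α => numAtoms α
  | Formula.orr α β => numAtoms α + numAtoms β
  | Formula.imp α β => numAtoms α + numAtoms β

/-! A pair refutes `α ∨ β` exactly when both components refute, so the sequences justifying
`¬(α ∨ β)` are the pairs of sequences justifying `¬α` and `¬β`; since weights are
multiplicative, the sum over this product set factors. -/

def WFS.pairEmbedding {V : Type} : WFS V × WFS V ↪ WFS V :=
  ⟨fun q => WFS.pair q.1 q.2, fun ⟨_, _⟩ ⟨_, _⟩ h => by cases h; rfl⟩

open scoped Classical in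
noncomputable def refutSeqs {V A : Type} [Fintype V] [DecidableEq V]
    (val : V → A → Bool) (γ : Formula A) : Finset (WFS V) :=
  (assocSeqs γ).filter fun s => ¬ Justif val s γ

section

variable {V A : Type} [Fintype V] [DecidableEq V]

theorem mu_neg (pbar : V → ℝ) (val : V → A → Bool) (γ : Formula A) :
    mu pbar val (Formula.neg γ) = ∑ s ∈ refutSeqs val γ, weight pbar s := by
  classical
  unfold mu refutSeqs
  congr 1
  exact Finset.filter_congr fun s _ => by cases s <;> rfl

theorem assocSeqs_orr (α β : Formula A) :
    (assocSeqs (Formula.orr α β) : Finset (WFS V))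
      = (assocSeqs α ×ˢ assocSeqs β).map WFS.pairEmbedding := by
  rw [Finset.map_eq_image, assocSeqs]
  rfl

theorem refutSeqs_orr (val : V → A → Bool) (α β : Formula A) :
    refutSeqs val (Formula.orr α β)
      = (refutSeqs val α ×ˢ refutSeqs val β).map WFS.pairEmbedding := by
  classical
  rw [refutSeqs, assocSeqs_orr, Finset.filter_map, refutSeqs, refutSeqs, ← Finset.filter_product]
  exact congrArg _ (Finset.filter_congr fun _ _ => not_or)

end

theorem stmt17_general {V A : Type} [Fintype V] [DecidableEq V] (pbar : V → ℝ)
    (val : V → A → Bool) (α β : Formula A) :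
    mu pbar val (Formula.neg (Formula.orr α β))
      = mu pbar val (Formula.neg α) * mu pbar val (Formula.neg β) := by
  rw [mu_neg, mu_neg, mu_neg, refutSeqs_orr, Finset.sum_map, Finset.sum_product,
    Finset.sum_mul_sum]
  rfl

/-- De Morgan at the measure level: μ(¬(α∨β)) = μ(¬α)·μ(¬β). -/
theorem stmt17 {V A : Type} [Fintype V] [DecidableEq V] (pbar : V → ℝ)
    (val : V → A → Bool)
    (hnn : ∀ v, 0 ≤ pbar v) (hsum : ∑ v, pbar v = 1) (α β : Formula A) :
    mu pbar val (Formula.neg (Formula.orr α β))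
      = mu pbar val (Formula.neg α) * mu pbar val (Formula.neg β) :=
  stmt17_general pbar val α β
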